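/- arXiv:1702.07297 — 2 statements merged into one kernel-verified Lean document; each statement's English description precedes it below -/
import Mathlib

section
/- Let Q ≥ 1 be an integer and define g : ℝ → ℝ by g(x) = (Q−x)/(Q·(x+1)). Then g is strictly convex on (−1, ∞), and for every x ∈ [0,Q], the infimum of the set {y : (x,y) ∈ convexHull ℝ {(r, g(r)) : r ∈ {0,1,…,Q}}} equals ĝ(x), where ĝ(x) = (⌊x⌋+1−x)·g(⌊x⌋) + (x−⌊x⌋)·g(⌊x⌋+1) for 0 ≤ x < Q and ĝ(Q) = g(Q) = 0. In other words, the lower convex envelope of the points {(r, g(r)) : r ∈ {0,…,Q}} is the piecewise-linear interpolation of g at the integers. -/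
/-- `g(x) = (Q−x)/(Q·(x+1))` is strictly convex on `(−1,∞)`,
and on `[0,Q]` the lower convex envelope of the points
`{(r, g(r)) : r ∈ {0,…,Q}}` — i.e. `x ↦ inf {y : (x,y) ∈ convexHull}` — is
the piecewise-linear interpolation of `g` at the integers. -/
theorem convex_envelope_is_interpolation (Q : ℕ) (hQ : 1 ≤ Q) (g : ℝ → ℝ)
    (hg : ∀ x : ℝ, g x = ((Q : ℝ) - x) / ((Q : ℝ) * (x + 1))) :
    StrictConvexOn ℝ (Set.Ioi (-1 : ℝ)) g ∧
    ∀ x ∈ Set.Icc (0 : ℝ) (Q : ℝ),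
      sInf {y : ℝ | (x, y) ∈
          convexHull ℝ {p : ℝ × ℝ | ∃ r : ℕ, r ≤ Q ∧ p = ((r : ℝ), g r)}} =
        ((⌊x⌋ : ℝ) + 1 - x) * g (⌊x⌋ : ℝ) + (x - (⌊x⌋ : ℝ)) * g ((⌊x⌋ : ℝ) + 1) := by
  constructor
  · have hQ' : (0:ℝ) < Q := by exact_mod_cast Nat.pos_of_ne_zero (by omega)
    refine ⟨convex_Ioi _, ?_⟩
    intro x hx y hy hxy a b ha hb hab
    have hx1 : (0:ℝ) < x + 1 := by have := Set.mem_Ioi.mp hx; linarith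
    have hy1 : (0:ℝ) < y + 1 := by have := Set.mem_Ioi.mp hy; linarith
    have hz1 : (0:ℝ) < a*x + b*y + 1 := by nlinarith
    simp only [smul_eq_mul, hg]
    have hb' : b = 1 - a := by linarith
    subst hb'
    have hid : a * (((Q:ℝ) - x)/((Q:ℝ)*(x+1))) + (1-a) * (((Q:ℝ) - y)/((Q:ℝ)*(y+1)))
        - (((Q:ℝ) - (a*x+(1-a)*y))/((Q:ℝ)*((a*x+(1-a)*y)+1)))
        = ((Q:ℝ)+1)*a*(1-a)*(x-y)^2 / ((Q:ℝ)*(x+1)*(y+1)*((a*x+(1-a)*y)+1)) := by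
      field_simp
      ring
    have h2 : 0 < (x - y)^2 :=
      lt_of_le_of_ne (sq_nonneg _) (Ne.symm (pow_ne_zero 2 (sub_ne_zero.mpr hxy)))
    have hpos : 0 < ((Q:ℝ)+1)*a*(1-a)*(x-y)^2 / ((Q:ℝ)*(x+1)*(y+1)*((a*x+(1-a)*y)+1)) := by
      exact div_pos (mul_pos (mul_pos (mul_pos (by linarith : (0:ℝ) < (Q:ℝ)+1) ha) hb) h2)
        (mul_pos (mul_pos (mul_pos hQ' hx1) hy1) hz1)
    linarith
  · have hQ' : (0:ℝ) < Q := by exact_mod_cast Nat.pos_of_ne_zero (by omega)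
    rintro x ⟨hx0, hxQ⟩
    set S : Set (ℝ × ℝ) := {p : ℝ × ℝ | ∃ r : ℕ, r ≤ Q ∧ p = ((r : ℝ), g r)} with hS
    set n : ℤ := ⌊x⌋ with hn
    have hn0 : 0 ≤ n := Int.floor_nonneg.mpr hx0
    have hNx : (n:ℝ) ≤ x := Int.floor_le x
    have hxN : x < (n:ℝ) + 1 := Int.lt_floor_add_one x
    have hnQ : n ≤ (Q:ℤ) := by
      have : (n:ℝ) ≤ (Q:ℝ) := le_trans hNx hxQ
      exact_mod_cast this
    set N : ℝ := (n:ℝ) with hNdef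
    set m : ℝ := g (N+1) - g N with hm
    set L : ℝ := (N + 1 - x) * g N + (x - N) * g (N + 1) with hL
    have hLline : L = g N + m * (x - N) := by rw [hL, hm]; ring
    -- key chord inequality
    have hchord : ∀ r : ℕ, r ≤ Q → g N + m * ((r:ℝ) - N) ≤ g ((r:ℝ)) := by
      intro r hr
      have hN1 : (0:ℝ) < N + 1 := by positivity
      have hN2 : (0:ℝ) < N + 2 := by positivity
      have hr1 : (0:ℝ) < (r:ℝ) + 1 := by positivity
      have hid : g ((r:ℝ)) - (g N + m * ((r:ℝ) - N))
          = ((Q:ℝ)+1) * (((r:ℝ)-N) * ((r:ℝ)-N-1)) / ((Q:ℝ) * ((r:ℝ)+1) * (N+1) * (N+2)) := by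
        rw [hm, hg, hg, hg]
        field_simp
        ring
      have hnum : (0:ℝ) ≤ ((r:ℝ)-N) * ((r:ℝ)-N-1) := by
        have h : (0:ℤ) ≤ ((r:ℤ) - n) * ((r:ℤ) - n - 1) := by
          rcases le_or_gt ((r:ℤ)) n with h | h
          · nlinarith
          · nlinarith
        calc (0:ℝ) ≤ ((((r:ℤ) - n) * ((r:ℤ) - n - 1) : ℤ) : ℝ) := by exact_mod_cast h
          _ = ((r:ℝ)-N) * ((r:ℝ)-N-1) := by push_cast [hNdef]; ring
      nlinarith [div_nonneg (mul_nonneg (by positivity : (0:ℝ) ≤ (Q:ℝ)+1) hnum)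
        (le_of_lt (by positivity : (0:ℝ) < (Q:ℝ) * ((r:ℝ)+1) * (N+1) * (N+2)))]
    -- membership of (x, L) in hull
    have hmemL : (x, L) ∈ convexHull ℝ S := by
      rcases eq_or_lt_of_le hnQ with heq | hlt
      · -- n = Q, so x = Q
        have hxQ' : x = N := by
          rw [hNdef, heq]; push_cast at hxQ ⊢
          exact le_antisymm hxQ (by rw [hNdef, heq] at hNx; push_cast at hNx; exact hNx)
        have hLg : L = g N := by rw [hL, hxQ']; ring
        rw [hxQ', hLg]
        apply subset_convexHull
        exact ⟨Q, le_refl _, by rw [hNdef, heq]; push_cast; rfl⟩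
      · -- n < Q
        have h1 : ((n.toNat : ℝ), g (n.toNat : ℝ)) ∈ S := ⟨n.toNat, by omega, rfl⟩
        have h2 : (((n.toNat+1 : ℕ) : ℝ), g ((n.toNat+1 : ℕ) : ℝ)) ∈ S := ⟨n.toNat+1, by omega, rfl⟩
        have hcast : ((n.toNat : ℕ) : ℝ) = N := by
          rw [hNdef]; exact_mod_cast Int.toNat_of_nonneg hn0
        have hcast1 : (((n.toNat+1 : ℕ)) : ℝ) = N + 1 := by push_cast [hcast]; ring
        rw [hcast] at h1
        rw [hcast1] at h2
        apply segment_subset_convexHull h1 h2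
        refine ⟨N + 1 - x, x - N, by linarith, by linarith, by ring, ?_⟩
        rw [Prod.smul_mk, Prod.smul_mk, Prod.mk_add_mk, smul_eq_mul, smul_eq_mul,
          smul_eq_mul, smul_eq_mul]
        exact Prod.ext (by ring) (by rw [hL])
    -- lower bound: hull ⊆ halfplane above chord
    have hlow : ∀ y : ℝ, (x, y) ∈ convexHull ℝ S → L ≤ y := by
      intro y hy
      have hH : Convex ℝ {p : ℝ × ℝ | g N + m * (p.1 - N) ≤ p.2} := by
        intro p hp q hq a b ha hb hab
        simp only [Set.mem_setOf_eq, Prod.fst_add, Prod.snd_add, Prod.smul_fst, Prod.smul_snd,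
          smul_eq_mul] at hp hq ⊢
        have hb' : b = 1 - a := by linarith
        subst hb'
        nlinarith [mul_le_mul_of_nonneg_left hp ha, mul_le_mul_of_nonneg_left hq hb]
      have hsub : S ⊆ {p : ℝ × ℝ | g N + m * (p.1 - N) ≤ p.2} := by
        rintro p ⟨r, hr, rfl⟩
        exact hchord r hr
      have := convexHull_min hsub hH hy
      rw [hLline]
      exact this
    refine le_antisymm (csInf_le ⟨L, fun y hy => hlow y hy⟩ hmemL) (le_csInf ⟨L, hmemL⟩ (fun y hy => hlow y hy))
end

section
/- Let Q ≥ 1 and H ≥ 1 be integers, and let N = N₁ + N₂ with N₁, N₂ ≥ 0, N ≥ 1, and H·Q dividing N₂. Then for every T ≥ 1 there exists a (Q+H, N, Q, T)-scheme with singleton Reduce assignment (servers 1,…,Q are solvers, the remaining H servers are helpers reducing nothing) in which each solver maps exactly N₁ + N₂·(Q−1)/Q files, each helper maps exactly N₂/H files, and the communication load equals N₂/(N·Q²). -/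
/-- A (K,N,Q,T)-scheme: K servers, N input files, Q output functions,
T-bit intermediate values.  `M k` is the set of files mapped by server `k`,
`W k` the set of functions reduced by server `k`, `len k` the length (in bits)
of server `k`'s message; `enc` produces the message of each server from its
locally computed intermediate values, and `dec` recovers, for each server `k`
and each `q ∈ W k`, the full row of intermediate values of function `q`
from all messages and the local values, correctly for every realization `v`. -/
structure Scheme (K N Q T : ℕ) where
  M : Fin K → Finset (Fin N)
  W : Fin K → Finset (Fin Q)
  cover : ∀ n : Fin N, ∃ k : Fin K, n ∈ M k
  len : Fin K → ℕ
  enc : (k : Fin K) → (Fin Q → {n : Fin N // n ∈ M k} → (Fin T → Bool)) →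
    (Fin (len k) → Bool)
  dec : (k : Fin K) → (q : Fin Q) → q ∈ W k →
    ((j : Fin K) → (Fin (len j) → Bool)) →
    (Fin Q → {n : Fin N // n ∈ M k} → (Fin T → Bool)) →
    (Fin N → Fin T → Bool)
  correct : ∀ (v : Fin Q × Fin N → Fin T → Bool) (k : Fin K) (q : Fin Q) (hq : q ∈ W k),
    dec k q hq (fun j => enc j (fun q' n => v (q', n.1))) (fun q' n => v (q', n.1)) =
      fun n => v (q, n)

/-- Peak computation load `p = (max_k |M k|)/N`. -/
noncomputable def peakLoad {K N Q T : ℕ} (S : Scheme K N Q T) : ℝ :=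
  ((Finset.univ.sup (fun k : Fin K => (S.M k).card) : ℕ) : ℝ) / N

/-- Communication load `L = (∑_k ℓ k)/(Q·N·T)`. -/
noncomputable def commLoad {K N Q T : ℕ} (S : Scheme K N Q T) : ℝ :=
  (∑ k : Fin K, (S.len k : ℝ)) / ((Q : ℝ) * N * T)

/-- Singleton Reduce assignment: the `W k` are pairwise disjoint, cover `Fin Q`,
and each server reduces at most one function. -/
def SingletonReduce {K N Q T : ℕ} (S : Scheme K N Q T) : Prop :=
  (∀ j k : Fin K, j ≠ k → Disjoint (S.W j) (S.W k)) ∧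
  (∀ q : Fin Q, ∃ k : Fin K, q ∈ S.W k) ∧
  (∀ k : Fin K, (S.W k).card ≤ 1)

/-!
Split the `N₂` files into `H` blocks, one per helper, and each block into `Q` subblocks of
`m = N₂/(HQ)` files. Solver `s` maps the `N₁` remaining files and every subblock except the
`s`-th one of each block; helper `h` maps its whole block. For each position `i` and each bit,
helper `h` broadcasts the sum over `g` (in `ZMod 2`) of the value of function `g` on the
`i`-th file of subblock `g`. Solver `s` knows every term except its own and subtracts them.
The helpers send `H·m·T = N₂T/Q` bits in total, so `L = N₂/(NQ²)`.
-/

open Finset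

noncomputable def Scheme.ofFintypeMsg {K N Q T : ℕ} (M : Fin K → Finset (Fin N))
    (W : Fin K → Finset (Fin Q)) (cover : ∀ n, ∃ k, n ∈ M k)
    (Msg : Fin K → Type) [∀ k, Fintype (Msg k)]
    (enc : (k : Fin K) → (Fin Q → {n // n ∈ M k} → Fin T → Bool) → Msg k → Bool)
    (dec : (k : Fin K) → (q : Fin Q) → q ∈ W k → ((j : Fin K) → Msg j → Bool) →
      (Fin Q → {n // n ∈ M k} → Fin T → Bool) → Fin N → Fin T → Bool)
    (correct : ∀ (v : Fin Q × Fin N → Fin T → Bool) k q (hq : q ∈ W k),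
      dec k q hq (fun j => enc j fun q' n => v (q', n.1)) (fun q' n => v (q', n.1)) =
        fun n => v (q, n)) :
    Scheme K N Q T where
  M := M
  W := W
  cover := cover
  len k := Fintype.card (Msg k)
  enc k u := enc k u ∘ (Fintype.equivFin (Msg k)).symm
  dec k q hq msgs := dec k q hq fun j => msgs j ∘ Fintype.equivFin (Msg j)
  correct v k q hq := by simpa [Function.comp_def] using correct v k q hq

/-- Outside `s` the value is the junk `false`. -/
def extendView {N Q T : ℕ} {s : Finset (Fin N)} (u : Fin Q → {n // n ∈ s} → Fin T → Bool)
    (q : Fin Q) (n : Fin N) : Fin T → Bool :=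
  if hn : n ∈ s then u q ⟨n, hn⟩ else fun _ => false

lemma extendView_restrict {N Q T : ℕ} {s : Finset (Fin N)} (v : Fin Q × Fin N → Fin T → Bool)
    {q : Fin Q} {n : Fin N} (hn : n ∈ s) :
    extendView (s := s) (fun q' n' => v (q', n'.1)) q n = v (q, n) :=
  dif_pos hn

lemma finSumFinEquiv_symm_of_lt {m n : ℕ} {k : Fin (m + n)} (hk : (k : ℕ) < m) :
    finSumFinEquiv.symm k = .inl ⟨k, hk⟩ :=
  finSumFinEquiv.symm_apply_eq.mpr (Fin.ext (by simp))

lemma finSumFinEquiv_symm_of_le {m n : ℕ} {k : Fin (m + n)} (hk : m ≤ (k : ℕ)) :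
    ∃ i, finSumFinEquiv.symm k = .inr i :=
  ⟨⟨k - m, by omega⟩, finSumFinEquiv.symm_apply_eq.mpr (Fin.ext (by simp; omega))⟩

def boolEquivZModTwo : Bool ≃ ZMod 2 where
  toFun b := if b then 1 else 0
  invFun x := x = 1
  left_inv := by decide
  right_inv := by decide

lemma singletonReduce_of_W_eq_toFinset {K N Q T : ℕ} (S : Scheme K N Q T)
    (σ : Fin K → Option (Fin Q)) (hW : ∀ k, S.W k = (σ k).toFinset)
    (hinj : ∀ j k q, σ j = some q → σ k = some q → j = k) (hsurj : ∀ q, ∃ k, σ k = some q) :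
    SingletonReduce S := by
  refine ⟨fun j k hjk => ?_, fun q => ?_, fun k => ?_⟩
  · simp only [hW, disjoint_left, Option.mem_toFinset, Option.mem_def]
    exact fun q hj hk => hjk (hinj j k q hj hk)
  · obtain ⟨k, hk⟩ := hsurj q
    exact ⟨k, by simp [hW, hk]⟩
  · rw [hW, Option.card_toFinset]
    cases σ k <;> simp

namespace HelperScheme

/-- `inl a` is one of the `N₁` files mapped by every solver; `inr (h, g, i)` is the `i`-th file
of subblock `g` of the block mapped by helper `h`. -/
abbrev FileLabel (N1 H Q m : ℕ) := Fin N1 ⊕ Fin H × Fin Q × Fin m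

variable {N N1 H Q m T : ℕ}

def solverFiles (s : Fin Q) : Finset (FileLabel N1 H Q m) :=
  univ.disjSum (univ ×ˢ univ.erase s ×ˢ univ)

def helperFiles (h : Fin H) : Finset (FileLabel N1 H Q m) :=
  (∅ : Finset (Fin N1)).disjSum ({h} ×ˢ univ)

@[simp] lemma inl_mem_solverFiles (s : Fin Q) (a : Fin N1) :
    (.inl a : FileLabel N1 H Q m) ∈ solverFiles s := by
  simp [solverFiles]

@[simp] lemma inr_mem_solverFiles {s g : Fin Q} {h : Fin H} {i : Fin m} :
    (.inr (h, g, i) : FileLabel N1 H Q m) ∈ solverFiles s ↔ g ≠ s := by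
  simp [solverFiles]

lemma eq_inr_of_not_mem_solverFiles {s : Fin Q} {c : FileLabel N1 H Q m}
    (hc : c ∉ solverFiles s) :
    ∃ h i, c = .inr (h, s, i) := by
  rcases c with a | ⟨h, g, i⟩
  · simp at hc
  · simp only [inr_mem_solverFiles, ne_eq, not_not] at hc
    exact ⟨h, i, by rw [hc]⟩

@[simp] lemma mem_helperFiles {h h' : Fin H} {g : Fin Q} {i : Fin m} :
    (.inr (h', g, i) : FileLabel N1 H Q m) ∈ helperFiles h ↔ h' = h := by
  simp [helperFiles, eq_comm]

lemma card_solverFiles (s : Fin Q) :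
    #(solverFiles s : Finset (FileLabel N1 H Q m)) = N1 + H * ((Q - 1) * m) := by
  simp [solverFiles, card_erase_of_mem]

lemma card_helperFiles (h : Fin H) : #(helperFiles h : Finset (FileLabel N1 H Q m)) = Q * m := by
  simp [helperFiles]

def serverFiles (k : Fin (Q + H)) : Finset (FileLabel N1 H Q m) :=
  Sum.elim solverFiles helperFiles (finSumFinEquiv.symm k)

def reduceAssignment (k : Fin (Q + H)) : Finset (Fin Q) :=
  (finSumFinEquiv.symm k).getLeft?.toFinset

lemma mem_reduceAssignment {k : Fin (Q + H)} {q : Fin Q} :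
    q ∈ reduceAssignment k ↔ finSumFinEquiv.symm k = .inl q := by
  simp [reduceAssignment, Sum.getLeft?_eq_some_iff]

lemma reduceAssignment_of_lt {k : Fin (Q + H)} (hk : (k : ℕ) < Q) :
    reduceAssignment k = {⟨k, hk⟩} := by
  rw [reduceAssignment, finSumFinEquiv_symm_of_lt hk, Sum.getLeft?_inl, Option.toFinset_some]

lemma reduceAssignment_of_le {k : Fin (Q + H)} (hk : Q ≤ (k : ℕ)) : reduceAssignment k = ∅ := by
  obtain ⟨h, hh⟩ := finSumFinEquiv_symm_of_le hk
  rw [reduceAssignment, hh, Sum.getLeft?_inr, Option.toFinset_none]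

variable (e : Fin N ≃ FileLabel N1 H Q m)

def mapAssignment (k : Fin (Q + H)) : Finset (Fin N) :=
  (serverFiles k).map e.symm.toEmbedding

lemma mem_mapAssignment {k : Fin (Q + H)} {n : Fin N} :
    n ∈ mapAssignment e k ↔ e n ∈ serverFiles k := by
  rw [mapAssignment, mem_map_equiv, Equiv.symm_symm]

lemma exists_mem_mapAssignment (hQ : 0 < Q) (n : Fin N) : ∃ k, n ∈ mapAssignment e k := by
  simp only [mem_mapAssignment]
  rcases e n with a | ⟨h, g, i⟩
  · exact ⟨finSumFinEquiv (.inl ⟨0, hQ⟩), by simp only [serverFiles, Equiv.symm_apply_apply,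
      Sum.elim_inl, inl_mem_solverFiles]⟩
  · exact ⟨finSumFinEquiv (.inr h), by simp only [serverFiles, Equiv.symm_apply_apply,
      Sum.elim_inr, mem_helperFiles]⟩

/-- Helper `h` sends one bit for each position `i` and bit index `t`; the fibre over a solver
is empty, so solvers send nothing. -/
abbrev MsgIndex (T : ℕ) (k : Fin (Q + H)) : Type :=
  {x : Fin H × Fin m × Fin T // finSumFinEquiv (.inr x.1) = k}

def enc (k : Fin (Q + H)) (u : Fin Q → {n // n ∈ mapAssignment e k} → Fin T → Bool) :
    MsgIndex (m := m) T k → Bool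
  | ⟨(h, i, t), _⟩ => boolEquivZModTwo.symm
      (∑ g, boolEquivZModTwo (extendView u g (e.symm (.inr (h, g, i))) t))

def dec (k : Fin (Q + H)) (q : Fin Q) (msgs : (j : Fin (Q + H)) → MsgIndex (m := m) T j → Bool)
    (u : Fin Q → {n // n ∈ mapAssignment e k} → Fin T → Bool) (n : Fin N) (t : Fin T) : Bool :=
  if n ∈ mapAssignment e k then extendView u q n t else
    Sum.elim (fun _ => false)
      (fun x => boolEquivZModTwo.symm (boolEquivZModTwo (msgs _ ⟨(x.1, x.2.2, t), rfl⟩) -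
        ∑ g ∈ univ.erase q, boolEquivZModTwo (extendView u g (e.symm (.inr (x.1, g, x.2.2))) t)))
      (e n)

lemma mem_mapAssignment_of_mem_reduceAssignment {k : Fin (Q + H)} {q : Fin Q}
    (hq : q ∈ reduceAssignment k) {n : Fin N} :
    n ∈ mapAssignment e k ↔ e n ∈ solverFiles q := by
  rw [mem_mapAssignment, serverFiles, mem_reduceAssignment.mp hq, Sum.elim_inl]

lemma dec_enc (v : Fin Q × Fin N → Fin T → Bool) (k : Fin (Q + H)) (q : Fin Q)
    (hq : q ∈ reduceAssignment k) :
    dec e k q (fun j => enc e j fun q' n => v (q', n.1)) (fun q' n => v (q', n.1)) =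
      fun n => v (q, n) := by
  funext n t
  by_cases hn : n ∈ mapAssignment e k
  · simp only [dec, if_pos hn, extendView_restrict v hn]
  obtain ⟨h, i, hni⟩ := eq_inr_of_not_mem_solverFiles
    ((mem_mapAssignment_of_mem_reduceAssignment e hq).not.mp hn)
  obtain rfl : n = e.symm (.inr (h, q, i)) := e.eq_symm_apply.mpr hni
  have helper_stores (g : Fin Q) : extendView (s := mapAssignment e (finSumFinEquiv (.inr h)))
      (fun q' n => v (q', n.1)) g (e.symm (.inr (h, g, i))) = v (g, e.symm (.inr (h, g, i))) :=
    extendView_restrict v (by simp [mem_mapAssignment, serverFiles])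
  have solver_stores (g : Fin Q) (hg : g ∈ univ.erase q) : extendView (s := mapAssignment e k)
      (fun q' n => v (q', n.1)) g (e.symm (.inr (h, g, i))) = v (g, e.symm (.inr (h, g, i))) :=
    extendView_restrict v <| (mem_mapAssignment_of_mem_reduceAssignment e hq).mpr <| by
      simpa using ne_of_mem_erase hg
  simp only [dec, if_neg hn, Equiv.apply_symm_apply, Sum.elim_inr, enc, helper_stores]
  rw [sum_congr (s₁ := univ.erase q) rfl fun g hg => by rw [solver_stores g hg],
    sum_erase_eq_sub (mem_univ q), sub_sub_cancel, Equiv.symm_apply_apply]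

lemma card_mapAssignment_of_lt {k : Fin (Q + H)} (hk : (k : ℕ) < Q) :
    #(mapAssignment e k) = N1 + H * ((Q - 1) * m) := by
  rw [mapAssignment, card_map, serverFiles, finSumFinEquiv_symm_of_lt hk, Sum.elim_inl,
    card_solverFiles]

lemma card_mapAssignment_of_le {k : Fin (Q + H)} (hk : Q ≤ (k : ℕ)) :
    #(mapAssignment e k) = Q * m := by
  obtain ⟨h, hh⟩ := finSumFinEquiv_symm_of_le hk
  rw [mapAssignment, card_map, serverFiles, hh, Sum.elim_inr, card_helperFiles]

lemma sum_card_msgIndex :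
    ∑ k : Fin (Q + H), Fintype.card (MsgIndex (m := m) T k) = H * (m * T) := by
  rw [← Fintype.card_sigma, Fintype.card_congr (Equiv.sigmaFiberEquiv _)]
  simp

noncomputable def scheme (hQ : 0 < Q) (T : ℕ) : Scheme (Q + H) N Q T :=
  Scheme.ofFintypeMsg (mapAssignment e) reduceAssignment (exists_mem_mapAssignment e hQ)
    (MsgIndex T) (enc e) (fun k q _ => dec e k q) (dec_enc e)

lemma singletonReduce_scheme (hQ : 0 < Q) : SingletonReduce (scheme e hQ T) :=
  singletonReduce_of_W_eq_toFinset _ (fun k => (finSumFinEquiv.symm k).getLeft?) (fun _ => rfl)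
    (fun j k q hj hk => finSumFinEquiv.symm.injective <| by
      rw [Sum.getLeft?_eq_some_iff.mp hj, Sum.getLeft?_eq_some_iff.mp hk])
    (fun q => ⟨finSumFinEquiv (.inl q), by simp⟩)

lemma commLoad_scheme (hQ : 0 < Q) (hT : T ≠ 0) :
    commLoad (scheme e hQ T) = (H * m : ℝ) / (Q * N) := by
  rw [commLoad, show ∑ k, ((scheme e hQ T).len k : ℝ) = H * m * T by
    exact_mod_cast (sum_card_msgIndex (T := T)).trans (mul_assoc _ _ _).symm]
  exact mul_div_mul_right _ _ (Nat.cast_ne_zero.mpr hT)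

end HelperScheme

theorem coded_scheme_exists_high_general (Q H N N1 N2 : ℕ) (hQ : 1 ≤ Q)
    (hN : N = N1 + N2) (hdvd : H * Q ∣ N2) :
    ∀ T : ℕ, 1 ≤ T → ∃ S : Scheme (Q + H) N Q T,
      SingletonReduce S ∧
      (∀ (k : Fin (Q + H)) (h : (k : ℕ) < Q), S.W k = {⟨(k : ℕ), h⟩}) ∧
      (∀ k : Fin (Q + H), Q ≤ (k : ℕ) → S.W k = ∅) ∧
      (∀ k : Fin (Q + H), (k : ℕ) < Q → (S.M k).card * Q = N1 * Q + N2 * (Q - 1)) ∧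
      (∀ k : Fin (Q + H), Q ≤ (k : ℕ) → (S.M k).card * H = N2) ∧
      commLoad S = (N2 : ℝ) / ((N : ℝ) * (Q : ℝ) ^ 2) := by
  intro T hT
  obtain ⟨m, rfl⟩ := hdvd
  let e : Fin N ≃ HelperScheme.FileLabel N1 H Q m :=
    Fintype.equivOfCardEq (by simp [hN, mul_assoc])
  refine ⟨HelperScheme.scheme e hQ T, HelperScheme.singletonReduce_scheme e hQ,
    fun k hk => HelperScheme.reduceAssignment_of_lt hk,
    fun k hk => HelperScheme.reduceAssignment_of_le hk, fun k hk => ?_, fun k hk => ?_, ?_⟩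
  · rw [HelperScheme.scheme, Scheme.ofFintypeMsg, HelperScheme.card_mapAssignment_of_lt e hk]
    ring
  · rw [HelperScheme.scheme, Scheme.ofFintypeMsg, HelperScheme.card_mapAssignment_of_le e hk]
    ring
  · rw [HelperScheme.commLoad_scheme e hQ (by omega)]
    have hQ' : (Q : ℝ) ≠ 0 := by positivity
    push_cast
    rw [← mul_div_mul_right (H * m : ℝ) (Q * N) hQ']
    ring

/-- achievability for the high-computation regime
(`r ∈ (Q-1, Q]`): `N₁` files are mapped at all solvers (no communication
needed for them) and the remaining `N₂` files are handled with `r = Q - 1`. -/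
theorem coded_scheme_exists_high (Q H N N1 N2 : ℕ) (hQ : 1 ≤ Q) (hH : 1 ≤ H)
    (hN : N = N1 + N2) (hNpos : 1 ≤ N) (hdvd : H * Q ∣ N2) :
    ∀ T : ℕ, 1 ≤ T → ∃ S : Scheme (Q + H) N Q T,
      SingletonReduce S ∧
      (∀ (k : Fin (Q + H)) (h : (k : ℕ) < Q), S.W k = {⟨(k : ℕ), h⟩}) ∧
      (∀ k : Fin (Q + H), Q ≤ (k : ℕ) → S.W k = ∅) ∧
      (∀ k : Fin (Q + H), (k : ℕ) < Q → (S.M k).card * Q = N1 * Q + N2 * (Q - 1)) ∧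
      (∀ k : Fin (Q + H), Q ≤ (k : ℕ) → (S.M k).card * H = N2) ∧
      commLoad S = (N2 : ℝ) / ((N : ℝ) * (Q : ℝ) ^ 2) :=
  coded_scheme_exists_high_general Q H N N1 N2 hQ hN hdvd
end
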